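/- arXiv:math/9907015 — 8 statements merged into one kernel-verified Lean document; each statement's English description precedes it below -/
import Mathlib

section
/- For every positive integer n, the sum over divisors d of n of μ(n/d)·L_d is nonnegative and divisible by n, where L is the Lucas sequence. -/
def lucas : ℕ → ℕ
  | 0 => 2
  | 1 => 1
  | n + 2 => lucas (n + 1) + lucas n

/-!
Since `A = !![1, 1; 1, 0]` satisfies `A ^ 2 = A + 1`, `L n` is the trace of `A ^ n`: the number of
closed walks of length `n` in the graph with adjacency matrix `A`, i.e. the number of points of
period `n` of the golden mean shift (binary sequences without two consecutive `1`s). By Möbius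
inversion the sum is the number of points of least period `n`, which is nonnegative, and divisible
by `n` because these points fall into shift orbits of exactly `n` elements.
-/

open Function Finset

namespace Function

variable {α : Type*} (f : α → α)

theorem dvd_ncard_setOf_minimalPeriod_eq {n : ℕ} (hn : 0 < n) :
    n ∣ {x | minimalPeriod f x = n}.ncard := by
  set S := {x | minimalPeriod f x = n}
  obtain hinf | hfin := S.infinite_or_finite
  · simp [hinf.ncard]
  classical
  have periodic {x} (hx : x ∈ S) : x ∈ periodicPts f :=
    minimalPeriod_pos_iff_mem_periodicPts.1 (hx.symm ▸ hn)
  have fiber {x} (hx : x ∈ S) :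
      {y ∈ hfin.toFinset | periodicOrbit f y = periodicOrbit f x} =
        (range n).image (f^[·] x) := by
    ext y
    simp only [mem_filter, Set.Finite.mem_toFinset, mem_image, mem_range]
    constructor
    · rintro ⟨hy, hxy⟩
      obtain ⟨k, rfl⟩ := (mem_periodicOrbit_iff (periodic hx)).1
        (hxy ▸ self_mem_periodicOrbit (periodic hy))
      exact ⟨k % n, Nat.mod_lt k hn, hx ▸ iterate_mod_minimalPeriod_eq⟩
    · rintro ⟨k, -, rfl⟩
      exact ⟨(minimalPeriod_apply_iterate (periodic hx) k).trans hx,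
        periodicOrbit_apply_iterate_eq (periodic hx) k⟩
  rw [Set.ncard_eq_toFinset_card S hfin, card_eq_sum_card_image (periodicOrbit f)]
  refine dvd_sum fun c hc => ?_
  obtain ⟨x, hx, rfl⟩ := mem_image.1 hc
  rw [Set.Finite.mem_toFinset] at hx
  rw [fiber hx, card_image_of_injOn, card_range]
  rw [coe_range, ← show minimalPeriod f x = n from hx]
  exact iterate_injOn_Iio_minimalPeriod

theorem ncard_ptsOfPeriod_eq_sum_divisors {n : ℕ} (hn : n ≠ 0)
    (hfin : (ptsOfPeriod f n).Finite) :
    (ptsOfPeriod f n).ncard = ∑ d ∈ n.divisors, {x | minimalPeriod f x = d}.ncard := by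
  classical
  rw [Set.ncard_eq_toFinset_card _ hfin, card_eq_sum_card_fiberwise (f := minimalPeriod f)
    fun x hx => Nat.mem_divisors.2 ⟨(hfin.mem_toFinset.1 hx).minimalPeriod_dvd, hn⟩]
  refine sum_congr rfl fun d hd => ?_
  rw [← Set.ncard_coe_finset]
  congr 1
  ext x
  simp only [coe_filter, Set.Finite.mem_toFinset, Set.mem_ofPred_eq, and_iff_right_iff_imp]
  rintro rfl
  exact (isPeriodicPt_minimalPeriod f x).trans_dvd (Nat.dvd_of_mem_divisors hd)

theorem sum_moebius_mul_ncard_ptsOfPeriod {n : ℕ} (hn : 0 < n) (hfin : (ptsOfPeriod f n).Finite) :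
    ∑ d ∈ n.divisors, (ArithmeticFunction.moebius (n / d) : ℤ) * (ptsOfPeriod f d).ncard =
      {x | minimalPeriod f x = n}.ncard := by
  have inversion := (ArithmeticFunction.sum_eq_iff_sum_mul_moebius_eq_on
    (f := fun d => ({x | minimalPeriod f x = d}.ncard : ℤ))
    (g := fun d => ((ptsOfPeriod f d).ncard : ℤ)) {m | m ∣ n} fun _ _ => dvd_trans).1
    (fun m hm hmn => by
      rw [ncard_ptsOfPeriod_eq_sum_divisors f hm.ne'
        (hfin.subset fun x hx => IsPeriodicPt.trans_dvd hx hmn)]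
      push_cast
      rfl) n hn dvd_rfl
  simp only [Int.cast_id] at inversion
  rwa [Nat.sum_divisorsAntidiagonal' fun a b =>
    ArithmeticFunction.moebius a * ((ptsOfPeriod f b).ncard : ℤ)] at inversion

end Function

namespace Relation

variable {V : Type*} (R : V → V → Prop)

def IsWalk {m : ℕ} (w : Fin (m + 1) → V) : Prop := ∀ k : Fin m, R (w k.castSucc) (w k.succ)

instance [DecidableRel R] {m : ℕ} : DecidablePred (IsWalk R (m := m)) :=
  fun _ => Fintype.decidableForallFintype

theorem isWalk_cons {m : ℕ} (a : V) (w : Fin (m + 1) → V) :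
    IsWalk R (Fin.cons a w : Fin (m + 2) → V) ↔ R a (w 0) ∧ IsWalk R w := by
  simp [IsWalk, Fin.forall_fin_succ]

def adjMatrix [DecidableRel R] : Matrix V V ℕ := Matrix.of fun i j => if R i j then 1 else 0

variable [Fintype V] [DecidableEq V] [DecidableRel R]

theorem card_walks (m : ℕ) (i j : V) :
    #{w : Fin (m + 1) → V | IsWalk R w ∧ w 0 = i ∧ w (Fin.last m) = j} =
      (adjMatrix R ^ m) i j := by
  rw [card_filter]
  induction m generalizing i with
  | zero =>
    rw [← (Equiv.funUnique (Fin 1) V).symm.sum_comp]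
    by_cases h : i = j <;> simp [IsWalk, h]
  | succ m ih =>
    -- a walk of length `m + 1` from `i` is `i` followed by a walk of length `m` from a neighbour
    rw [pow_succ', Matrix.mul_apply, ← (Fin.consEquiv fun _ => V).sum_comp, Fintype.sum_prod_type]
    simp only [Fin.consEquiv, Equiv.coe_fn_mk, isWalk_cons, Fin.cons_zero, ← Fin.succ_last,
      Fin.cons_succ, ← ih, mul_sum]
    rw [sum_comm (s := (univ : Finset V)), sum_comm (s := (univ : Finset V))]
    apply sum_congr rfl
    intro w _
    rw [sum_eq_single i (fun a _ ha => by simp [ha]) (by simp),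
      sum_eq_single (w 0) (fun a _ ha => by simp [Ne.symm ha]) (by simp)]
    by_cases h : R i (w 0) <;> simp [adjMatrix, h]

theorem card_closedWalks (n : ℕ) :
    #{w : Fin (n + 1) → V | IsWalk R w ∧ w 0 = w (Fin.last n)} = (adjMatrix R ^ n).trace := by
  simp only [Matrix.trace, Matrix.diag, ← card_walks, card_filter]
  rw [sum_comm]
  refine sum_congr rfl fun w _ => ?_
  rw [sum_eq_single (w 0) (fun a _ ha => by simp [Ne.symm ha]) (by simp)]
  simp [eq_comm]

end Relation

open Relation

abbrev VertexShift {V : Type*} (R : V → V → Prop) : Type _ :=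
  {x : ℕ → V // ∀ k, R (x k) (x (k + 1))}

namespace VertexShift

variable {V : Type*} {R : V → V → Prop}

def shift (x : VertexShift R) : VertexShift R := ⟨fun k => x.1 (k + 1), fun k => x.2 (k + 1)⟩

theorem shift_iterate_apply (x : VertexShift R) (m k : ℕ) : (shift^[m] x).1 k = x.1 (k + m) := by
  induction m generalizing x with
  | zero => rfl
  | succ m ih => rw [iterate_succ_apply, ih]; rfl

theorem isPeriodicPt_shift_iff {n : ℕ} {x : VertexShift R} :
    IsPeriodicPt shift n x ↔ ∀ k, x.1 (k + n) = x.1 k := by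
  simp only [IsPeriodicPt, IsFixedPt, Subtype.ext_iff, funext_iff, shift_iterate_apply]

theorem apply_mod_of_isPeriodicPt {n : ℕ} {x : VertexShift R} (hx : IsPeriodicPt shift n x)
    (k : ℕ) : x.1 (k % n) = x.1 k := by
  simpa [shift_iterate_apply] using congrArg (·.1 0) (hx.iterate_mod_apply k)

variable {n : ℕ}

def unroll (hn : 0 < n) (w : Fin (n + 1) → V) (k : ℕ) : V :=
  w ⟨k % n, (k.mod_lt hn).trans n.lt_succ_self⟩

theorem unroll_mod (hn : 0 < n) (w : Fin (n + 1) → V) (k : ℕ) :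
    unroll hn w (k % n) = unroll hn w k := by
  simp only [unroll, Nat.mod_mod]

theorem unroll_add_self (hn : 0 < n) (w : Fin (n + 1) → V) (k : ℕ) :
    unroll hn w (k + n) = unroll hn w k := by
  rw [← unroll_mod, Nat.add_mod_right, unroll_mod]

theorem unroll_of_le (hn : 0 < n) {w : Fin (n + 1) → V} (hw : w 0 = w (Fin.last n)) {k : ℕ}
    (hk : k ≤ n) :
    unroll hn w k = w ⟨k, Nat.lt_succ_of_le hk⟩ := by
  rcases hk.lt_or_eq with hk | rfl
  · simp only [unroll, Nat.mod_eq_of_lt hk]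
  · simp only [unroll, Nat.mod_self]
    exact hw

theorem rel_unroll_succ (hn : 0 < n) {w : Fin (n + 1) → V} (hw : IsWalk R w)
    (hw₀ : w 0 = w (Fin.last n)) (k : ℕ) : R (unroll hn w k) (unroll hn w (k + 1)) := by
  have hk := k.mod_lt hn
  rw [← unroll_mod hn w (k + 1), ← Nat.mod_add_mod, unroll_mod, ← unroll_mod hn w k,
    unroll_of_le hn hw₀ hk.le, unroll_of_le hn hw₀ hk]
  exact hw ⟨k % n, hk⟩

def ptsOfPeriodEquiv (hn : 0 < n) : ptsOfPeriod (shift (R := R)) n ≃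
    {w : Fin (n + 1) → V // IsWalk R w ∧ w 0 = w (Fin.last n)} where
  toFun x := ⟨fun k => x.1.1 k, fun k => x.1.2 k,
    by simpa using (isPeriodicPt_shift_iff.1 x.2 0).symm⟩
  invFun w := ⟨⟨unroll hn w.1, rel_unroll_succ hn w.2.1 w.2.2⟩,
    isPeriodicPt_shift_iff.2 (unroll_add_self hn w.1)⟩
  left_inv x := by
    ext k
    exact apply_mod_of_isPeriodicPt x.2 k
  right_inv w := by
    ext k
    exact unroll_of_le hn w.2.2 (Nat.le_of_lt_succ k.2)

theorem finite_ptsOfPeriod [Finite V] (hn : 0 < n) : (ptsOfPeriod (shift (R := R)) n).Finite :=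
  Set.finite_coe_iff.1 (Finite.of_equiv _ (ptsOfPeriodEquiv hn).symm)

theorem ncard_ptsOfPeriod [Fintype V] [DecidableEq V] [DecidableRel R] (hn : 0 < n) :
    (ptsOfPeriod (shift (R := R)) n).ncard = (adjMatrix R ^ n).trace := by
  rw [← Nat.card_coe_set_eq, Nat.card_congr (ptsOfPeriodEquiv hn), Nat.card_eq_fintype_card,
    Fintype.card_subtype, card_closedWalks]

end VertexShift

theorem Matrix.trace_pow_add_two_of_sq_eq_add_one {ι R : Type*} [Fintype ι] [DecidableEq ι]
    [Semiring R] {M : Matrix ι ι R} (hM : M ^ 2 = M + 1) (k : ℕ) :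
    (M ^ (k + 2)).trace = (M ^ (k + 1)).trace + (M ^ k).trace := by
  rw [pow_add, hM, mul_add, mul_one, ← pow_succ, Matrix.trace_add]

def goldenMean (a b : Bool) : Prop := ¬(a ∧ b)

instance : DecidableRel goldenMean := fun a b => inferInstanceAs (Decidable ¬(a ∧ b))

theorem adjMatrix_goldenMean_sq : adjMatrix goldenMean ^ 2 = adjMatrix goldenMean + 1 := by
  decide

theorem lucas_eq_trace_adjMatrix_goldenMean : ∀ n, lucas n = (adjMatrix goldenMean ^ n).trace
  | 0 => rfl
  | 1 => rfl
  | n + 2 => by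
    rw [Matrix.trace_pow_add_two_of_sq_eq_add_one adjMatrix_goldenMean_sq,
      ← lucas_eq_trace_adjMatrix_goldenMean n, ← lucas_eq_trace_adjMatrix_goldenMean (n + 1)]
    rfl

theorem lucas_moebius_sum (n : ℕ) (hn : 1 ≤ n) :
    0 ≤ ∑ d ∈ n.divisors, (ArithmeticFunction.moebius (n / d) : ℤ) * (lucas d : ℤ) ∧
    (n : ℤ) ∣ ∑ d ∈ n.divisors, (ArithmeticFunction.moebius (n / d) : ℤ) * (lucas d : ℤ) := by
  have lucas_eq_ncard (d : ℕ) (hd : d ∈ n.divisors) :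
      lucas d = (ptsOfPeriod (VertexShift.shift (R := goldenMean)) d).ncard := by
    rw [VertexShift.ncard_ptsOfPeriod (Nat.pos_of_mem_divisors hd),
      lucas_eq_trace_adjMatrix_goldenMean]
  rw [sum_congr rfl fun d hd => by rw [lucas_eq_ncard d hd],
    sum_moebius_mul_ncard_ptsOfPeriod _ hn (VertexShift.finite_ptsOfPeriod hn)]
  exact ⟨Nat.cast_nonneg _, Int.natCast_dvd_natCast.2 (dvd_ncard_setOf_minimalPeriod_eq _ hn)⟩
end

section
/- For every prime p and every integer k ≥ 1, L_{p^k} ≡ L_{p^{k-1}} (mod p^k), where L is the Lucas sequence. -/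
noncomputable def ga : ℝ := (1 + Real.sqrt 5) / 2
noncomputable def gb : ℝ := (1 - Real.sqrt 5) / 2

lemma sqrt5_sq : Real.sqrt 5 * Real.sqrt 5 = 5 := Real.mul_self_sqrt (by norm_num)
lemma ga_sq : ga ^ 2 = ga + 1 := by unfold ga; nlinarith [sqrt5_sq]
lemma gb_sq : gb ^ 2 = gb + 1 := by unfold gb; nlinarith [sqrt5_sq]
lemma ga_add_gb : ga + gb = 1 := by unfold ga gb; ring
lemma ga_mul_gb : ga * gb = -1 := by unfold ga gb; nlinarith [sqrt5_sq]

lemma cast_lucas : ∀ n, ((lucas n : ℝ)) = ga ^ n + gb ^ n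
  | 0 => by norm_num [lucas]
  | 1 => by simp [lucas, ga_add_gb]
  | n + 2 => by
    have h1 := cast_lucas (n + 1)
    have h2 := cast_lucas n
    have h3 : (lucas (n+2) : ℝ) = (lucas (n+1) : ℝ) + lucas n := by
      rw [lucas]; push_cast; ring
    have e1 : ga ^ (n+2) = ga ^ n * ga ^ 2 := by ring
    have e2 : gb ^ (n+2) = gb ^ n * gb ^ 2 := by ring
    rw [h3, h1, h2, e1, e2, ga_sq, gb_sq]; ring

lemma master (p h : ℕ) (hp : p.Prime) (hph : p = 2*h+1) (x y : ℝ) :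
    (x + y)^p = x^p + y^p + p * ∑ i ∈ Finset.Icc 1 h,
      (((p.choose i)/p : ℕ) : ℝ) * ((x*y)^i * (x^(p-2*i) + y^(p-2*i))) := by
  rw [add_pow_prime_eq' hp]
  congr 2
  set g : ℕ → ℝ := fun k => x ^ k * y ^ (p - k) * ↑(p.choose k / p) with hg
  have e1 : Finset.Ioo 0 p = Finset.Ioc 0 (2*h) := by
    ext i; simp only [Finset.mem_Ioo, Finset.mem_Ioc]; omega
  have e2 : Finset.Icc 1 h = Finset.Ioc 0 h := by
    ext i; simp only [Finset.mem_Icc, Finset.mem_Ioc]; omega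
  rw [e1, e2, ← Finset.sum_Ioc_consecutive g (Nat.zero_le h) (by omega : h ≤ 2*h)]
  have e3 : ∑ k ∈ Finset.Ioc h (2*h), g k = ∑ i ∈ Finset.Ioc 0 h, g (p - i) := by
    apply Finset.sum_nbij' (fun k => p - k) (fun i => p - i)
    · intro a ha; simp only [Finset.mem_Ioc] at *; omega
    · intro a ha; simp only [Finset.mem_Ioc] at *; omega
    · intro a ha; simp only [Finset.mem_Ioc] at ha; omega
    · intro a ha; simp only [Finset.mem_Ioc] at ha; omega
    · intro a ha; simp only [Finset.mem_Ioc] at ha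
      congr 1; omega
  rw [e3, ← Finset.sum_add_distrib]
  apply Finset.sum_congr rfl
  intro i hi
  simp only [Finset.mem_Ioc] at hi
  have h1 : p - (p - i) = i := by omega
  have h2 : p.choose (p - i) = p.choose i := by
    rw [Nat.choose_symm (by omega : i ≤ p)]
  have h3 : p - i = (p - 2*i) + i := by omega
  rw [hg]
  simp only [h1, h2]
  rw [h3, pow_add, pow_add, mul_pow]
  ring

lemma lucas_mul_odd (p h : ℕ) (hp : p.Prime) (hph : p = 2*h+1) (m : ℕ) :
    (lucas (p*m) : ℤ) = (lucas m:ℤ)^p - p * ∑ i ∈ Finset.Icc 1 h,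
      ((p.choose i / p : ℕ):ℤ) * ((-1)^(m*i) * (lucas (m*(p-2*i)) : ℤ)) := by
  apply @Int.cast_injective ℝ
  simp only [Int.cast_sub, Int.cast_mul, Int.cast_pow, Int.cast_natCast, Int.cast_sum,
    Int.cast_neg, Int.cast_one, cast_lucas]
  rw [master p h hp hph (ga^m) (gb^m)]
  have hS : ∀ i ∈ Finset.Icc 1 h,
      ((p.choose i / p : ℕ) : ℝ) * ((ga^m*gb^m)^i * ((ga^m)^(p-2*i) + (gb^m)^(p-2*i)))
      = ((p.choose i / p : ℕ) : ℝ) * ((-1:ℝ)^(m*i) * (ga^(m*(p-2*i)) + gb^(m*(p-2*i)))) := by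
    intro i _
    rw [← mul_pow, ga_mul_gb, ← pow_mul, ← pow_mul, ← pow_mul]
  rw [Finset.sum_congr rfl hS, ← pow_mul, ← pow_mul, mul_comm p m]
  ring

lemma lucas_mul_two (m : ℕ) :
    (lucas (2*m) : ℤ) = (lucas m:ℤ)^2 - 2 * (-1)^m := by
  apply @Int.cast_injective ℝ
  simp only [Int.cast_sub, Int.cast_mul, Int.cast_pow, Int.cast_natCast, Int.cast_neg,
    Int.cast_one, Int.cast_ofNat, cast_lucas]
  have e : ((-1:ℝ))^m = ga^m * gb^m := by rw [← mul_pow, ga_mul_gb]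
  rw [e, pow_mul', pow_mul']
  ring


lemma pow_lift (p : ℕ) (hp : p.Prime) (j : ℕ) (hj : 1 ≤ j) (a b : ℤ)
    (h : (p:ℤ)^j ∣ a - b) : (p:ℤ)^(j+1) ∣ a^p - b^p := by
  obtain ⟨c, hc⟩ := h
  have ha : a = b + (p:ℤ)^j * c := by linarith
  have key : a^p - b^p = ((p:ℤ)^j*c)^p + (p:ℤ) * ∑ k ∈ Finset.Ioo 0 p,
      b ^ k * ((p:ℤ)^j*c) ^ (p - k) * ↑(p.choose k / p) := by
    rw [ha, (Commute.all b ((p:ℤ)^j * c)).add_pow_prime_eq' hp]; ring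
  rw [key]
  have h1 : (p:ℤ)^(j+1) ∣ ((p:ℤ)^j * c)^p := by
    rw [mul_pow, ← pow_mul]
    exact Dvd.dvd.mul_right (pow_dvd_pow _ (by nlinarith [hp.two_le])) _
  have h2 : (p:ℤ)^(j+1) ∣ (p:ℤ) * ∑ k ∈ Finset.Ioo 0 p,
      b ^ k * ((p:ℤ)^j*c) ^ (p - k) * ↑(p.choose k / p) := by
    rw [pow_succ, mul_comm ((p:ℤ)^j)]
    refine mul_dvd_mul (dvd_refl _) (Finset.dvd_sum ?_)
    intro k hk
    rw [Finset.mem_Ioo] at hk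
    have e : ((p:ℤ)^j*c) ^ (p - k) = ((p:ℤ)^j*c) * ((p:ℤ)^j*c)^(p-k-1) := by
      rw [← pow_succ']; congr 1; omega
    rw [e]
    exact ⟨b^k * (c * ((p:ℤ)^j*c)^(p-k-1)) * ↑(p.choose k / p), by ring⟩
  exact dvd_add h1 h2


lemma odd_main (p h : ℕ) (hp : p.Prime) (hph : p = 2*h+1) :
    ∀ k d, ((p:ℤ))^(k+1) ∣ (lucas (p^(k+1)*d) : ℤ) - (lucas (p^k*d) : ℤ) := by
  intro k
  induction k with
  | zero =>
    intro d
    haveI := Fact.mk hp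
    have A := lucas_mul_odd p h hp hph d
    rw [show p*d = p^(0+1)*d by ring] at A
    rw [A, pow_zero, one_mul, pow_one]
    have f1 : (p:ℤ) ∣ (lucas d:ℤ)^p - (lucas d:ℤ) := by
      have : (((lucas d:ℤ)^p - (lucas d:ℤ) : ℤ) : ZMod p) = 0 := by
        push_cast
        rw [ZMod.pow_card]
        ring
      exact (ZMod.intCast_zmod_eq_zero_iff_dvd _ _).mp this
    have f2 : (p:ℤ) ∣ (p:ℤ) * ∑ i ∈ Finset.Icc 1 h,
        ((p.choose i / p : ℕ):ℤ) * ((-1)^(d*i) * (lucas (d*(p-2*i)) : ℤ)) := dvd_mul_right _ _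
    have e : (lucas d:ℤ)^p - (p:ℤ) * (∑ i ∈ Finset.Icc 1 h,
        ((p.choose i / p : ℕ):ℤ) * ((-1)^(d*i) * (lucas (d*(p-2*i)) : ℤ))) - (lucas d:ℤ)
        = ((lucas d:ℤ)^p - (lucas d:ℤ)) - (p:ℤ) * ∑ i ∈ Finset.Icc 1 h,
        ((p.choose i / p : ℕ):ℤ) * ((-1)^(d*i) * (lucas (d*(p-2*i)) : ℤ)) := by ring
    rw [e]
    exact dvd_sub f1 f2
  | succ k ih =>
    intro d
    have hoddp : Odd p := ⟨h, by omega⟩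
    have A := lucas_mul_odd p h hp hph (p^(k+1)*d)
    rw [show p*(p^(k+1)*d) = p^(k+2)*d by ring] at A
    have B := lucas_mul_odd p h hp hph (p^k*d)
    rw [show p*(p^k*d) = p^(k+1)*d by ring] at B
    set a := (lucas (p^(k+1)*d) : ℤ) with ha
    set b := (lucas (p^k*d) : ℤ) with hb
    rw [A]
    nth_rewrite 2 [B]
    have t1 : (p:ℤ)^(k+2) ∣ a^p - b^p := by
      have := pow_lift p hp (k+1) (by omega) a b (ih d)
      convert this using 2
    have sgn : ∀ j i : ℕ, ((-1:ℤ))^(p^j*d*i) = (-1)^(d*i) := by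
      intro j i
      rw [mul_assoc, pow_mul, (hoddp.pow).neg_one_pow]
    have t2 : (p:ℤ)^(k+2) ∣
        (p:ℤ) * (∑ i ∈ Finset.Icc 1 h, ((p.choose i / p : ℕ):ℤ) *
          ((-1)^(p^(k+1)*d*i) * (lucas (p^(k+1)*d*(p-2*i)) : ℤ)))
        - (p:ℤ) * (∑ i ∈ Finset.Icc 1 h, ((p.choose i / p : ℕ):ℤ) *
          ((-1)^(p^k*d*i) * (lucas (p^k*d*(p-2*i)) : ℤ))) := by
      rw [← mul_sub, ← Finset.sum_sub_distrib, pow_succ']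
      refine mul_dvd_mul (dvd_refl _) (Finset.dvd_sum ?_)
      intro i _
      have ihi := ih (d*(p-2*i))
      rw [show p^(k+1)*(d*(p-2*i)) = p^(k+1)*d*(p-2*i) by ring,
          show p^k*(d*(p-2*i)) = p^k*d*(p-2*i) by ring] at ihi
      have e2 : ((p.choose i / p : ℕ):ℤ) * ((-1)^(p^(k+1)*d*i) * (lucas (p^(k+1)*d*(p-2*i)) : ℤ))
          - ((p.choose i / p : ℕ):ℤ) * ((-1)^(p^k*d*i) * (lucas (p^k*d*(p-2*i)) : ℤ))
          = ((p.choose i / p : ℕ):ℤ) * (-1)^(d*i) *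
            ((lucas (p^(k+1)*d*(p-2*i)) : ℤ) - (lucas (p^k*d*(p-2*i)) : ℤ)) := by
        rw [sgn, sgn]; ring
      rw [e2]
      exact Dvd.dvd.mul_left ihi _
    have e3 : (a^p - (p:ℤ) * (∑ i ∈ Finset.Icc 1 h, ((p.choose i / p : ℕ):ℤ) *
          ((-1)^(p^(k+1)*d*i) * (lucas (p^(k+1)*d*(p-2*i)) : ℤ))))
        - (b^p - (p:ℤ) * (∑ i ∈ Finset.Icc 1 h, ((p.choose i / p : ℕ):ℤ) *
          ((-1)^(p^k*d*i) * (lucas (p^k*d*(p-2*i)) : ℤ))))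
        = (a^p - b^p) - ((p:ℤ) * (∑ i ∈ Finset.Icc 1 h, ((p.choose i / p : ℕ):ℤ) *
          ((-1)^(p^(k+1)*d*i) * (lucas (p^(k+1)*d*(p-2*i)) : ℤ)))
        - (p:ℤ) * (∑ i ∈ Finset.Icc 1 h, ((p.choose i / p : ℕ):ℤ) *
          ((-1)^(p^k*d*i) * (lucas (p^k*d*(p-2*i)) : ℤ)))) := by ring
    rw [e3]
    exact dvd_sub t1 t2

lemma lucas_two_pow_odd : ∀ k, ¬ (2:ℤ) ∣ (lucas (2^(k+1)) : ℤ)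
  | 0 => by norm_num [show lucas 2 = 3 from rfl]
  | (k+1) => by
    have ih := lucas_two_pow_odd k
    have A := lucas_mul_two (2^(k+1))
    rw [show 2*2^(k+1) = 2^(k+2) by ring] at A
    rw [A, Even.neg_one_pow ⟨2^k, by ring⟩]
    intro hdvd
    apply ih
    have : (2:ℤ) ∣ (lucas (2^(k+1)) : ℤ)^2 := by
      have : ((lucas (2^(k+1)) : ℤ)^2 : ℤ) = ((lucas (2^(k+1)):ℤ)^2 - 2*1) + 2*1 := by ring
      rw [this]
      exact dvd_add hdvd ⟨1, by ring⟩
    exact Int.prime_two.dvd_of_dvd_pow this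

lemma two_main : ∀ k, (2:ℤ)^(k+1) ∣ (lucas (2^(k+1)):ℤ) - lucas (2^k)
  | 0 => by norm_num [show lucas 2 = 3 from rfl, show lucas 1 = 1 from rfl]
  | 1 => by norm_num [show lucas 4 = 7 from rfl, show lucas 2 = 3 from rfl]
  | (k+2) => by
    have ih := two_main (k+1)
    have A := lucas_mul_two (2^(k+2))
    rw [show 2*2^(k+2) = 2^(k+3) by ring] at A
    rw [Even.neg_one_pow ⟨2^(k+1), by ring⟩] at A
    have B := lucas_mul_two (2^(k+1))
    rw [show 2*2^(k+1) = 2^(k+2) by ring] at B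
    rw [Even.neg_one_pow ⟨2^k, by ring⟩] at B
    set a := (lucas (2^(k+2)) : ℤ) with ha
    set b := (lucas (2^(k+1)) : ℤ) with hb
    rw [A]
    nth_rewrite 2 [B]
    have e : (a^2 - 2*1) - (b^2 - 2*1) = (a - b) * (a + b) := by ring
    rw [e, show ((2:ℤ))^(k+3) = 2^(k+2) * 2 by ring]
    refine mul_dvd_mul ih ?_
    have ha : Odd a := Int.not_even_iff_odd.mp (fun he => lucas_two_pow_odd (k+1) he.two_dvd)
    have hb : Odd b := Int.not_even_iff_odd.mp (fun he => lucas_two_pow_odd k he.two_dvd)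
    exact (ha.add_odd hb).two_dvd

theorem lucas_prime_pow (p : ℕ) (hp : p.Prime) (k : ℕ) (hk : 1 ≤ k) :
    lucas (p ^ k) ≡ lucas (p ^ (k - 1)) [MOD p ^ k] := by
  have hk' : k = (k-1)+1 := by omega
  rw [Nat.modEq_iff_dvd]
  rcases hp.eq_two_or_odd' with h2 | hodd
  · subst h2
    have := two_main (k-1)
    rw [← hk'] at this
    push_cast
    exact dvd_sub_comm.mp this
  · obtain ⟨h, hph⟩ := hodd
    have := odd_main p h hp (by omega) (k-1) 1
    rw [mul_one, mul_one, ← hk'] at this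
    push_cast
    exact dvd_sub_comm.mp this
end

section
/- For distinct primes p and q, L_{pq} + 1 ≡ L_p + L_q (mod pq), where L is the Lucas sequence. -/
open Matrix

def lucasMatrix (R : Type*) [Semiring R] : Matrix (Fin 2) (Fin 2) R :=
  !![1, 1; 1, 0]

section

variable (R : Type*) [Semiring R]

lemma lucasMatrix_sq : lucasMatrix R ^ 2 = lucasMatrix R + 1 := by
  ext i j
  fin_cases i <;> fin_cases j <;> simp [lucasMatrix, sq]

lemma trace_lucasMatrix_pow (n : ℕ) : trace (lucasMatrix R ^ n) = (lucas n : R) := by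
  induction n using Nat.strong_induction_on with
  | _ n ih =>
    match n with
    | 0 => simp [lucas]
    | 1 => simp [lucas, lucasMatrix, Matrix.trace, Fin.sum_univ_succ]
    | n + 2 =>
      have hrec : lucasMatrix R ^ (n + 2) = lucasMatrix R ^ (n + 1) + lucasMatrix R ^ n := by
        rw [pow_add, lucasMatrix_sq, mul_add, mul_one, ← pow_succ]
      rw [hrec, trace_add, ih (n + 1) (by omega), ih n (by omega), lucas, Nat.cast_add]

end

lemma lucas_mul_prime_modEq (n : ℕ) {p : ℕ} (hp : p.Prime) :
    lucas (n * p) ≡ lucas n [MOD p] := by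
  have : Fact p.Prime := ⟨hp⟩
  rw [← ZMod.natCast_eq_natCast_iff, ← trace_lucasMatrix_pow, ← trace_lucasMatrix_pow, pow_mul,
    ZMod.trace_pow_card, ZMod.pow_card]

lemma lucas_prime_modEq_one {p : ℕ} (hp : p.Prime) : lucas p ≡ 1 [MOD p] := by
  simpa [lucas] using lucas_mul_prime_modEq 1 hp

theorem lucas_pq (p q : ℕ) (hp : p.Prime) (hq : q.Prime) (hne : p ≠ q) :
    lucas (p * q) + 1 ≡ lucas p + lucas q [MOD p * q] := by
  have hmod_p : lucas (p * q) + 1 ≡ lucas p + lucas q [MOD p] := by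
    rw [mul_comm, add_comm (lucas p)]
    exact (lucas_mul_prime_modEq q hp).add (lucas_prime_modEq_one hp).symm
  have hmod_q : lucas (p * q) + 1 ≡ lucas p + lucas q [MOD q] :=
    (lucas_mul_prime_modEq p hq).add (lucas_prime_modEq_one hq).symm
  exact (Nat.modEq_and_modEq_iff_modEq_mul ((Nat.coprime_primes hp hq).mpr hne)).mp
    ⟨hmod_p, hmod_q⟩
end

section
/- If p is a prime congruent to 2 or 3 modulo 5, then F_{p-2} ≡ -2 (mod p), where F is the Fibonacci sequence. -/
open Polynomial

private lemma fib_aux_ns2 : ¬ IsSquare (((2 : ℕ) : ℤ) : ZMod 5) := by decide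
private lemma fib_aux_ns3 : ¬ IsSquare (((3 : ℕ) : ℤ) : ZMod 5) := by decide

/-- Auxiliary: the defining equation of the root. -/
private lemma fib_aux_root_sq {p : ℕ} [Fact p.Prime]
    (f : (ZMod p)[X]) (hf : f = X ^ 2 - X - 1) :
    (AdjoinRoot.root f) ^ 2 = AdjoinRoot.root f + 1 := by
  subst hf
  have := AdjoinRoot.eval₂_root (X ^ 2 - X - 1 : (ZMod p)[X])
  simp only [eval₂_sub, eval₂_pow, eval₂_X, eval₂_one] at this
  linear_combination this

/-- Auxiliary: in `AdjoinRoot (X^2 - X - 1)` over `ZMod p`, Binet-style identity. -/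
private lemma fib_aux_binet {p : ℕ} [Fact p.Prime]
    (f : (ZMod p)[X]) (hf : f = X ^ 2 - X - 1) (n : ℕ) :
    ((Nat.fib n : ℕ) : AdjoinRoot f) * (2 * AdjoinRoot.root f - 1)
      = (AdjoinRoot.root f) ^ n - (1 - AdjoinRoot.root f) ^ n := by
  set α := AdjoinRoot.root f with hα
  have hroot : α ^ 2 = α + 1 := fib_aux_root_sq f hf
  induction n using Nat.strong_induction_on with
  | _ n ih =>
    match n with
    | 0 => simp
    | 1 => simp; ring
    | (m + 2) =>
      have h1 := ih m (by omega)
      have h2 := ih (m + 1) (by omega)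
      have hfib : (Nat.fib (m + 2) : AdjoinRoot f)
          = (Nat.fib m : AdjoinRoot f) + (Nat.fib (m + 1) : AdjoinRoot f) := by
        rw [Nat.fib_add_two]; push_cast; ring
      have hβ : (1 - α) ^ 2 = (1 - α) + 1 := by linear_combination hroot
      calc ((Nat.fib (m + 2) : ℕ) : AdjoinRoot f) * (2 * α - 1)
          = (Nat.fib m : AdjoinRoot f) * (2 * α - 1)
            + (Nat.fib (m + 1) : AdjoinRoot f) * (2 * α - 1) := by rw [hfib]; ring
        _ = (α ^ m - (1 - α) ^ m) + (α ^ (m + 1) - (1 - α) ^ (m + 1)) := by rw [h1, h2]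
        _ = α ^ m * (α + 1) - (1 - α) ^ m * ((1 - α) + 1) := by ring
        _ = α ^ (m + 2) - (1 - α) ^ (m + 2) := by
            rw [← hroot, ← hβ]; ring

theorem fib_sub_two (p : ℕ) (hp : p.Prime) (h : p % 5 = 2 ∨ p % 5 = 3) :
    (Nat.fib (p - 2) : ℤ) ≡ -2 [ZMOD (p : ℤ)] := by
  haveI : Fact p.Prime := ⟨hp⟩
  rcases eq_or_ne p 2 with rfl | hp2
  · decide
  have hodd : p % 2 = 1 := hp.eq_two_or_odd.resolve_left hp2
  have hp5 : p ≠ 5 := by omega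
  -- 5 is a nonsquare mod p
  haveI : Fact (Nat.Prime 5) := ⟨by norm_num⟩
  have hval : legendreSym 5 (p : ℤ) = -1 := by
    rw [legendreSym.mod]
    have he : (p : ℤ) % ((5 : ℕ) : ℤ) = ((p % 5 : ℕ) : ℤ) := by push_cast; omega
    rw [he]
    rcases h with h' | h' <;> rw [h']
    · exact (legendreSym.eq_neg_one_iff 5).mpr fib_aux_ns2
    · exact (legendreSym.eq_neg_one_iff 5).mpr fib_aux_ns3
  have hleg : legendreSym p 5 = -1 :=
    (legendreSym.quadratic_reciprocity_one_mod_four (p := 5) (q := p)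
      (by norm_num) hp2).trans hval
  have h5ns : ¬ IsSquare (5 : ZMod p) := by
    have := (legendreSym.eq_neg_one_iff p (a := 5)).mp hleg
    simpa using this
  -- Euler's criterion value
  have heuler : (5 : ZMod p) ^ (p / 2) = -1 := by
    have h1 := legendreSym.eq_pow p 5
    rw [hleg] at h1
    push_cast at h1
    exact h1.symm
  -- Setup the quadratic extension
  set f : (ZMod p)[X] := X ^ 2 - X - 1 with hf
  have hdeg : f.degree = 2 := by
    rw [hf]
    compute_degree!
  haveI : Nontrivial (AdjoinRoot f) := AdjoinRoot.nontrivial f (by rw [hdeg]; norm_num)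
  haveI : CharP (AdjoinRoot f) p := charP_of_injective_algebraMap'
    (ZMod p) (A := AdjoinRoot f) p
  set α := AdjoinRoot.root f with hα
  have hroot : α ^ 2 = α + 1 := fib_aux_root_sq f hf
  set s : AdjoinRoot f := 2 * α - 1 with hs
  have hinj : Function.Injective (algebraMap (ZMod p) (AdjoinRoot f)) :=
    (algebraMap (ZMod p) (AdjoinRoot f)).injective
  have e5 : (5 : AdjoinRoot f) = algebraMap (ZMod p) (AdjoinRoot f) (5 : ZMod p) :=
    (map_ofNat _ 5).symm
  have e2 : (2 : AdjoinRoot f) = algebraMap (ZMod p) (AdjoinRoot f) (2 : ZMod p) :=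
    (map_ofNat _ 2).symm
  have hs2 : s ^ 2 = 5 := by
    rw [hs]
    linear_combination (4 : AdjoinRoot f) * hroot
  -- 5 and 2 are units downstairs, hence nonzero images
  have h5z : (5 : ZMod p) ≠ 0 := by
    have : ((5 : ℕ) : ZMod p) ≠ 0 := by
      rw [Ne, ZMod.natCast_eq_zero_iff]
      intro hd
      exact hp5 ((Nat.prime_dvd_prime_iff_eq hp (by norm_num)).mp hd)
    simpa using this
  have h2z : (2 : ZMod p) ≠ 0 := by
    have : ((2 : ℕ) : ZMod p) ≠ 0 := by
      rw [Ne, ZMod.natCast_eq_zero_iff]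
      intro hd
      exact hp2 ((Nat.prime_dvd_prime_iff_eq hp (by norm_num)).mp hd)
    simpa using this
  have h5u : IsUnit (5 : AdjoinRoot f) := by
    have := (IsUnit.mk0 _ h5z).map (algebraMap (ZMod p) (AdjoinRoot f))
    rwa [← e5] at this
  have h2u : IsUnit (2 : AdjoinRoot f) := by
    have := (IsUnit.mk0 _ h2z).map (algebraMap (ZMod p) (AdjoinRoot f))
    rwa [← e2] at this
  have hsu : IsUnit s := by
    rcases h5u with ⟨u, hu⟩
    exact IsUnit.of_mul_eq_one (a := s) (s * ↑u⁻¹) (by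
      rw [← mul_assoc, ← pow_two, hs2, ← hu, Units.mul_inv])
  -- the Frobenius computation: s ^ p = -s
  have h5pow : (5 : AdjoinRoot f) ^ (p / 2) = -1 := by
    rw [e5, ← map_pow, heuler, map_neg, map_one]
  have hsp : s ^ p = -s := by
    have hps : p = 2 * (p / 2) + 1 := by omega
    calc s ^ p = s ^ (2 * (p / 2)) * s := by rw [← pow_succ, ← hps]
      _ = (s ^ 2) ^ (p / 2) * s := by rw [pow_mul]
      _ = (5 : AdjoinRoot f) ^ (p / 2) * s := by rw [hs2]
      _ = -s := by rw [h5pow]; ring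
  -- fib p = -1 in ZMod p
  have hbinp := fib_aux_binet f hf p
  rw [← hα, ← hs] at hbinp
  have hop : Odd p := Nat.odd_iff.mpr hodd
  have hfrobsub : (1 - α) ^ p = 1 - α ^ p := by
    have h1 := add_pow_char (R := AdjoinRoot f) (p := p) (x := 1) (y := -α)
    rw [hop.neg_pow] at h1
    simpa [← sub_eq_add_neg] using h1
  have hbin2 : ((Nat.fib p : ℕ) : AdjoinRoot f) * s = 2 * α ^ p - 1 := by
    rw [hbinp, hfrobsub]; ring
  have hsp2 : s ^ p = 2 * α ^ p - 1 := by
    have h2p : (2 : AdjoinRoot f) ^ p = 2 := by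
      rw [e2, ← map_pow, ZMod.pow_card]
    have h1 := add_pow_char (R := AdjoinRoot f) (p := p) (x := 2 * α) (y := (-1 : AdjoinRoot f))
    rw [hop.neg_one_pow, mul_pow, h2p] at h1
    calc s ^ p = (2 * α + (-1)) ^ p := by rw [hs]; ring_nf
      _ = 2 * α ^ p + (-1) := h1
      _ = 2 * α ^ p - 1 := by ring
  have hfibp : ((Nat.fib p : ℕ) : ZMod p) = -1 := by
    have hcancel : s * ((Nat.fib p : ℕ) : AdjoinRoot f) = s * (-1 : AdjoinRoot f) := by
      rw [mul_comm s _, mul_comm s _, hbin2, ← hsp2, hsp]; ring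
    have hval2 : ((Nat.fib p : ℕ) : AdjoinRoot f) = -1 := hsu.mul_left_cancel hcancel
    have hmap : algebraMap (ZMod p) (AdjoinRoot f) ((Nat.fib p : ℕ) : ZMod p)
        = algebraMap (ZMod p) (AdjoinRoot f) (-1) := by
      rw [map_natCast, map_neg, map_one]
      exact hval2
    exact hinj hmap
  -- α ^ p = 1 - α
  have hαp : α ^ p = 1 - α := by
    have hkey : (2 : AdjoinRoot f) * α ^ p = 2 * (1 - α) := by
      have h1 : 2 * α ^ p - 1 = -s := by rw [← hsp2, hsp]
      rw [hs] at h1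
      linear_combination h1
    exact h2u.mul_left_cancel hkey
  -- fib (p + 1) = 0 in ZMod p
  have hfibp1 : ((Nat.fib (p + 1) : ℕ) : ZMod p) = 0 := by
    have hbin := fib_aux_binet f hf (p + 1)
    rw [← hα, ← hs] at hbin
    have hz : ((Nat.fib (p + 1) : ℕ) : AdjoinRoot f) * s = 0 := by
      rw [hbin, pow_succ, pow_succ, hfrobsub, hαp]
      ring
    have h0 : ((Nat.fib (p + 1) : ℕ) : AdjoinRoot f) = 0 :=
      hsu.mul_left_cancel (by rw [mul_comm]; simpa using hz)
    have hmap : algebraMap (ZMod p) (AdjoinRoot f) ((Nat.fib (p + 1) : ℕ) : ZMod p)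
        = algebraMap (ZMod p) (AdjoinRoot f) 0 := by
      rw [map_natCast, map_zero]
      exact h0
    exact hinj hmap
  -- conclude
  clear hbinp hbin2 hsp hsp2 hs2 hroot hαp hfrobsub hsu h5u h2u h5pow hs hα hf hdeg
  obtain ⟨k, rfl⟩ : ∃ k, p = k + 3 := ⟨p - 3, by have := hp.two_le; omega⟩
  have e1 : Nat.fib (k + 3) = Nat.fib (k + 1) + Nat.fib (k + 2) := Nat.fib_add_two
  have e2' : Nat.fib (k + 4) = Nat.fib (k + 2) + Nat.fib (k + 3) := Nat.fib_add_two
  rw [show k + 3 + 1 = k + 4 from rfl] at hfibp1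
  rw [← ZMod.intCast_eq_intCast_iff]
  have goal' : ((Nat.fib (k + 1) : ℕ) : ZMod (k + 3)) = -2 := by
    rw [e1] at hfibp
    rw [e2', e1] at hfibp1
    push_cast at hfibp hfibp1
    linear_combination 2 * hfibp - hfibp1
  have hk : k + 3 - 2 = k + 1 := by omega
  rw [hk]
  push_cast
  push_cast at goal'
  rw [goal']
end

section
/- For every odd prime p with p ≠ 5, F_{p-1} ≡ 0 or 1 (mod p), where F is the Fibonacci sequence. -/
open Polynomial

theorem fib_pred_zero_or_one (p : ℕ) (hp : p.Prime) (hodd : Odd p) (h5 : p ≠ 5) :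
    Nat.fib (p - 1) ≡ 0 [MOD p] ∨ Nat.fib (p - 1) ≡ 1 [MOD p] := by
  haveI : Fact p.Prime := ⟨hp⟩
  have hp2 : p ≠ 2 := by rintro rfl; exact (by decide : ¬ Odd 2) hodd
  have hp1 : 1 ≤ p := hp.one_lt.le
  obtain ⟨k, hk⟩ := hodd
  have h5z' : (5 : ZMod p) ≠ 0 := by
    have : (5 : ZMod p) = ((5 : ℕ) : ZMod p) := by push_cast; ring
    rw [this, Ne, ZMod.natCast_eq_zero_iff]
    intro hdvd
    exact h5 ((Nat.prime_dvd_prime_iff_eq hp (by norm_num)).mp hdvd)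
  have h2z' : (2 : ZMod p) ≠ 0 := by
    have : (2 : ZMod p) = ((2 : ℕ) : ZMod p) := by push_cast; ring
    rw [this, Ne, ZMod.natCast_eq_zero_iff]
    intro hdvd
    exact hp2 ((Nat.prime_dvd_prime_iff_eq hp (by norm_num)).mp hdvd)
  have h4z' : (4 : ZMod p) ≠ 0 := by
    have : (4 : ZMod p) = 2 * 2 := by norm_num
    rw [this]; exact mul_ne_zero h2z' h2z'
  set f : (ZMod p)[X] := X ^ 2 - C 5 with hf
  have hdeg : f.degree ≠ 0 := by
    rw [hf, degree_X_pow_sub_C (by norm_num : 0 < 2)]; decide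
  set i : ZMod p →+* AdjoinRoot f := AdjoinRoot.of f with hi0
  have hi : Function.Injective i := AdjoinRoot.of.injective_of_degree_ne_zero hdeg
  haveI : CharP (AdjoinRoot f) p := charP_of_injective_ringHom hi p
  set α : AdjoinRoot f := AdjoinRoot.root f with hα
  have hα2 : α ^ 2 = i 5 := by
    have h := AdjoinRoot.eval₂_root f
    rw [hf] at h
    simp only [eval₂_sub, eval₂_pow, eval₂_X, eval₂_C, sub_eq_zero] at h
    exact h
  have hi5 : (i 5 : AdjoinRoot f) = 5 := by rw [map_ofNat]
  have hαu : IsUnit α := by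
    refine IsUnit.of_mul_eq_one (a := α) (i (5⁻¹) * α) ?_
    have h1 : α * (i 5⁻¹ * α) = i 5⁻¹ * α ^ 2 := by ring
    rw [h1, hα2, ← map_mul, inv_mul_cancel₀ h5z', map_one]
  set a : AdjoinRoot f := 1 + α with ha0
  set b : AdjoinRoot f := 1 - α with hb0
  have ha2 : a ^ 2 = 2 * a + 4 := by
    have h1 : a ^ 2 = 1 + 2 * α + α ^ 2 := by rw [ha0]; ring
    rw [h1, hα2, hi5, ha0]; ring
  have hb2 : b ^ 2 = 2 * b + 4 := by
    have h1 : b ^ 2 = 1 - 2 * α + α ^ 2 := by rw [hb0]; ring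
    rw [h1, hα2, hi5, hb0]; ring
  -- the key identity
  have key : ∀ n : ℕ, ((2 ^ n * Nat.fib n : ℕ) : AdjoinRoot f) * α = a ^ n - b ^ n := by
    intro n
    induction n using Nat.twoStepInduction with
    | zero => simp
    | one =>
      rw [ha0, hb0]
      push_cast [Nat.fib_one]
      ring
    | more n ih0 ih1 =>
      have hstepa : a ^ (n + 2) = 2 * a ^ (n + 1) + 4 * a ^ n := by
        have h1 : a ^ (n + 2) = a ^ n * a ^ 2 := by ring
        rw [h1, ha2]; ring
      have hstepb : b ^ (n + 2) = 2 * b ^ (n + 1) + 4 * b ^ n := by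
        have h1 : b ^ (n + 2) = b ^ n * b ^ 2 := by ring
        rw [h1, hb2]; ring
      have hcast : ((2 ^ (n + 2) * Nat.fib (n + 2) : ℕ) : AdjoinRoot f) * α
          = 2 * (((2 ^ (n + 1) * Nat.fib (n + 1) : ℕ) : AdjoinRoot f) * α)
            + 4 * (((2 ^ n * Nat.fib n : ℕ) : AdjoinRoot f) * α) := by
        rw [Nat.fib_add_two]; push_cast; ring
      rw [hcast, ih0, ih1, hstepa, hstepb]; ring
  -- Frobenius on α
  set ε : ZMod p := (5 : ZMod p) ^ k with hε0
  have hε : ε = 1 ∨ ε = -1 := by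
    rw [← mul_self_eq_one_iff, hε0, ← pow_add]
    have hkk : k + k = p - 1 := by omega
    rw [hkk]
    exact ZMod.pow_card_sub_one_eq_one h5z'
  have hαp : α ^ p = i ε * α := by
    have h1 : α ^ p = (α ^ 2) ^ k * α := by
      have h2 : α ^ p = α ^ (2 * k + 1) := congrArg (fun n => α ^ n) hk
      rw [h2, pow_succ, pow_mul]
    rw [h1, hα2, ← map_pow]
  have cancelα : ∀ x y : AdjoinRoot f, x * α = y * α → x = y := fun x y h =>
    hαu.mul_left_cancel (by rw [mul_comm α x, mul_comm α y, h])
  have cast2 : ∀ n : ℕ, ((2 ^ n * Nat.fib n : ℕ) : AdjoinRoot f)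
      = i ((2 : ZMod p) ^ n * (Nat.fib n : ZMod p)) := by
    intro n
    rw [map_mul, map_pow, map_natCast, map_ofNat]
    push_cast; ring
  -- main goal, in ZMod p
  rw [← ZMod.natCast_eq_natCast_iff, ← ZMod.natCast_eq_natCast_iff, Nat.cast_zero, Nat.cast_one]
  have h2pow : ∀ n : ℕ, (2 : ZMod p) ^ n ≠ 0 := fun n => pow_ne_zero n h2z'
  rcases hε with hε | hε
  · -- 5 is a QR : F_{p-1} ≡ 0
    left
    have hap : a ^ p = a := by
      rw [ha0, add_pow_char, one_pow, hαp, hε, map_one, one_mul]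
    have hbp : b ^ p = b := by
      rw [hb0, sub_pow_char, one_pow, hαp, hε, map_one, one_mul]
    have hi4 : (i (-4) : AdjoinRoot f) = -4 := by
      rw [map_neg, map_ofNat]
    have hab : a * b = i (-4) := by
      have h1 : a * b = 1 - α ^ 2 := by rw [ha0, hb0]; ring
      rw [h1, hα2, hi5, hi4]; ring
    have hau : IsUnit a := by
      refine isUnit_of_mul_isUnit_left (y := b) ?_
      rw [hab]
      exact (isUnit_iff_ne_zero.mpr (neg_ne_zero.mpr h4z')).map i
    have hbu : IsUnit b := by
      refine isUnit_of_mul_isUnit_left (y := a) ?_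
      rw [mul_comm, hab]
      exact (isUnit_iff_ne_zero.mpr (neg_ne_zero.mpr h4z')).map i
    have hap1 : a ^ (p - 1) = 1 := by
      have h1 : a ^ (p - 1) * a = 1 * a := by
        rw [one_mul, ← pow_succ]
        have : p - 1 + 1 = p := by omega
        rw [this, hap]
      exact hau.mul_left_cancel (by rw [mul_comm a _, mul_comm a 1, h1])
    have hbp1 : b ^ (p - 1) = 1 := by
      have h1 : b ^ (p - 1) * b = 1 * b := by
        rw [one_mul, ← pow_succ]
        have : p - 1 + 1 = p := by omega
        rw [this, hbp]
      exact hbu.mul_left_cancel (by rw [mul_comm b _, mul_comm b 1, h1])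
    have h0 : ((2 ^ (p - 1) * Nat.fib (p - 1) : ℕ) : AdjoinRoot f) * α = 0 * α := by
      rw [key, hap1, hbp1, sub_self, zero_mul]
    have h1 := cancelα _ _ h0
    rw [cast2] at h1
    have h2 : (2 : ZMod p) ^ (p - 1) * (Nat.fib (p - 1) : ZMod p) = 0 := by
      apply hi
      rw [h1, map_zero]
    rcases mul_eq_zero.mp h2 with h | h
    · exact absurd h (h2pow _)
    · exact h
  · -- 5 is not a QR : F_p ≡ -1, F_{p+1} ≡ 0, so F_{p-1} ≡ 1
    right
    have hap : a ^ p = b := by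
      rw [ha0, add_pow_char, one_pow, hαp, hε, map_neg, map_one, hb0]; ring
    have hbp : b ^ p = a := by
      rw [hb0, sub_pow_char, one_pow, hαp, hε, map_neg, map_one, ha0]; ring
    -- F_p ≡ -1
    have hfp : (Nat.fib p : ZMod p) = -1 := by
      have h0 : ((2 ^ p * Nat.fib p : ℕ) : AdjoinRoot f) * α = i (-2) * α := by
        have hi2 : (i (-2) : AdjoinRoot f) = -2 := by rw [map_neg, map_ofNat]
        rw [key, hap, hbp, hb0, ha0, hi2]; ring
      have h1 := cancelα _ _ h0
      rw [cast2] at h1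
      have h2 : (2 : ZMod p) ^ p * (Nat.fib p : ZMod p) = -2 := hi h1
      rw [ZMod.pow_card] at h2
      have h3 : (2 : ZMod p) * (Nat.fib p : ZMod p) = 2 * (-1) := by rw [h2]; ring
      exact mul_left_cancel₀ h2z' h3
    -- F_{p+1} ≡ 0
    have hfp1 : (Nat.fib (p + 1) : ZMod p) = 0 := by
      have hap1 : a ^ (p + 1) = b * a := by rw [pow_succ, hap]
      have hbp1 : b ^ (p + 1) = a * b := by rw [pow_succ, hbp]
      have h0 : ((2 ^ (p + 1) * Nat.fib (p + 1) : ℕ) : AdjoinRoot f) * α = 0 * α := by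
        rw [key, hap1, hbp1, zero_mul]; ring
      have h1 := cancelα _ _ h0
      rw [cast2] at h1
      have h2 : (2 : ZMod p) ^ (p + 1) * (Nat.fib (p + 1) : ZMod p) = 0 := by
        apply hi; rw [h1, map_zero]
      rcases mul_eq_zero.mp h2 with h | h
      · exact absurd h (h2pow _)
      · exact h
    -- combine
    have hrec : Nat.fib (p + 1) = Nat.fib p + Nat.fib (p - 1) := by
      have h1 : p + 1 = (p - 1) + 2 := by omega
      have h2 : p = (p - 1) + 1 := by omega
      rw [h1, Nat.fib_add_two, ← h2, Nat.add_comm]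
    have : ((Nat.fib (p + 1) : ℕ) : ZMod p) = (Nat.fib p : ZMod p) + (Nat.fib (p - 1) : ZMod p) := by
      rw [hrec]; push_cast; ring
    rw [hfp1, hfp] at this
    linear_combination -this
end

section
/- Let a, b be positive integers, and define U_1 = a, U_2 = b, U_{n+2} = U_{n+1} + U_n. Then for all n ≥ 1 the sum ∑_{d ∣ n} μ(n/d) U_d is nonnegative and divisible by n if and only if b = 3a. -/
/-!
The Lucas numbers `L n` (`L 1 = 1`, `L 2 = 3`) count the points of period `n` of the golden mean
shift (sequences of bits with no two consecutive ones): such points are closed walks of length `n`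
in the graph with adjacency matrix `!![1, 1; 1, 0]`, so their number is the trace of the `n`-th
power of that matrix, and `A ^ 2 = A + 1` gives the recurrence.
For any map `f`, Möbius inversion turns `∑_{d ∣ n} μ (n / d) #Fix (f^d)` into the number of points
of least period `n`, which is nonnegative and, as these points fall into orbits of size `n`,
divisible by `n`.

Every solution of the recurrence is `U n = a L n + (b - 3 a) F (n - 1)`. For `n = 2 ^ (k + 1)`
the Möbius sum of `F (n - 1)` is `F (2 ^ (k + 1) - 1) - F (2 ^ k - 1)`, which is odd because
`2 ∣ F m ↔ 3 ∣ m`; so the divisibility conditions force `2 ^ (k + 1) ∣ b - 3 a` for every `k`.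
-/

open Finset Function ArithmeticFunction

namespace Function

variable {α : Type*} (f : α → α)

theorem fixedPoints_iterate_eq_biUnion {n : ℕ} (hn : n ≠ 0) :
    fixedPoints f^[n] = ⋃ d ∈ n.divisors, {x | minimalPeriod f x = d} := by
  ext x
  simp [hn, ← isPeriodicPt_iff_minimalPeriod_dvd, IsPeriodicPt]

theorem ncard_fixedPoints_iterate {n : ℕ} (hn : n ≠ 0) (hfin : (fixedPoints f^[n]).Finite) :
    (fixedPoints f^[n]).ncard = ∑ d ∈ n.divisors, {x | minimalPeriod f x = d}.ncard := by
  rw [fixedPoints_iterate_eq_biUnion f hn, ← Finset.set_biUnion_coe] at hfin ⊢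
  rw [Set.Finite.ncard_biUnion n.divisors.finite_toSet, finsum_mem_coe_finset]
  · exact fun d hd =>
      hfin.subset (Set.subset_biUnion_of_mem (u := fun d => {x | minimalPeriod f x = d}) hd)
  · exact fun d _ e _ hde => Set.disjoint_left.2 fun x hd he => hde (hd.symm.trans he)

theorem sum_moebius_ncard_fixedPoints (hfin : ∀ n ≠ 0, (fixedPoints f^[n]).Finite)
    {n : ℕ} (hn : n ≠ 0) :
    ∑ d ∈ n.divisors, moebius (n / d) * ((fixedPoints f^[d]).ncard : ℤ) =
      {x | minimalPeriod f x = n}.ncard := by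
  have := (sum_eq_iff_sum_mul_moebius_eq (R := ℤ)
    (f := fun d => ({x | minimalPeriod f x = d}.ncard : ℤ))
    (g := fun m => ((fixedPoints f^[m]).ncard : ℤ))).1
    (fun m hm => by exact_mod_cast (ncard_fixedPoints_iterate f hm.ne' (hfin m hm.ne')).symm)
    n (Nat.pos_of_ne_zero hn)
  simpa only [Int.cast_id, Nat.sum_divisorsAntidiagonal'
    (fun i j => moebius i * ((fixedPoints f^[j]).ncard : ℤ))] using this

theorem dvd_ncard_minimalPeriod_eq {n : ℕ} (hn : n ≠ 0)
    (hfin : {x | minimalPeriod f x = n}.Finite) :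
    n ∣ {x | minimalPeriod f x = n}.ncard := by
  classical
  set P := {x | minimalPeriod f x = n}
  let orbit (x : α) : Finset α := (range n).image (f^[·] x)
  have card_orbit {x} (hx : x ∈ P) : #(orbit x) = n := by
    rw [card_image_of_injOn, card_range]
    rw [coe_range, ← show minimalPeriod f x = n from hx]
    exact iterate_injOn_Iio_minimalPeriod
  have iterate_mem_orbit {x} (hx : x ∈ P) (j : ℕ) : f^[j] x ∈ orbit x := by
    refine mem_image.2 ⟨j % n, mem_range.2 (Nat.mod_lt _ (Nat.pos_of_ne_zero hn)), ?_⟩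
    rw [← hx, iterate_mod_minimalPeriod_eq]
  have orbit_subset {x y} (hx : x ∈ P) (hy : y ∈ orbit x) : orbit y ⊆ orbit x := by
    obtain ⟨i, -, rfl⟩ := mem_image.1 hy
    intro z hz
    obtain ⟨j, -, rfl⟩ := mem_image.1 hz
    simpa only [← iterate_add_apply] using iterate_mem_orbit hx (j + i)
  have mem_of_mem_orbit {x y} (hx : x ∈ P) (hy : y ∈ orbit x) : y ∈ P := by
    obtain ⟨i, -, rfl⟩ := mem_image.1 hy
    rwa [Set.mem_ofPred_eq, minimalPeriod_apply_iterate
      (minimalPeriod_pos_iff_mem_periodicPts.1 (hx ▸ Nat.pos_of_ne_zero hn))]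
  have fiber {x} (hx : x ∈ P) : {y ∈ hfin.toFinset | orbit y = orbit x} = orbit x := by
    ext y
    simp only [mem_filter, Set.Finite.mem_toFinset]
    refine ⟨fun ⟨hy, hyx⟩ => hyx ▸ by simpa using iterate_mem_orbit hy 0,
      fun hy => ⟨mem_of_mem_orbit hx hy, eq_of_subset_of_card_le (orbit_subset hx hy) ?_⟩⟩
    rw [card_orbit hx, card_orbit (mem_of_mem_orbit hx hy)]
  rw [Set.ncard_eq_toFinset_card _ hfin, card_eq_sum_card_image orbit]
  refine dvd_sum fun O hO => ?_
  obtain ⟨x, hx, rfl⟩ := mem_image.1 hO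
  rw [Set.Finite.mem_toFinset] at hx
  rw [fiber hx, card_orbit hx]

theorem dvd_sum_moebius_ncard_fixedPoints (hfin : ∀ n ≠ 0, (fixedPoints f^[n]).Finite)
    {n : ℕ} (hn : n ≠ 0) :
    (n : ℤ) ∣ ∑ d ∈ n.divisors, moebius (n / d) * ((fixedPoints f^[d]).ncard : ℤ) := by
  rw [sum_moebius_ncard_fixedPoints f hfin hn]
  refine Int.natCast_dvd_natCast.2 (dvd_ncard_minimalPeriod_eq f hn ((hfin n hn).subset ?_))
  intro x hx
  rw [← hx]
  exact isPeriodicPt_minimalPeriod f x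

end Function

namespace Matrix

variable {V : Type*} [Fintype V] [DecidableEq V]

theorem pow_apply_eq_sum_walks {S : Type*} [CommSemiring S] (M : Matrix V V S) (n : ℕ) (i j : V) :
    (M ^ n) i j = ∑ w : Fin (n + 1) → V with w 0 = i ∧ w (Fin.last n) = j,
      ∏ k : Fin n, M (w k.castSucc) (w k.succ) := by
  induction n generalizing i with
  | zero =>
    rw [pow_zero, one_apply, sum_filter, ← (Equiv.funUnique (Fin 1) V).symm.sum_comp]
    simp [ite_and]
  | succ n ih =>
    rw [pow_succ', mul_apply, sum_filter, ← (Fin.consEquiv fun _ => V).sum_comp,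
      Fintype.sum_prod_type]
    simp only [ih, sum_filter, mul_sum, mul_ite, mul_zero, Fin.consEquiv_apply, Fin.cons_zero,
      Fin.cons_last, Fin.cons_succ, Fin.prod_univ_succ, Fin.castSucc_zero, Fin.castSucc_succ]
    rw [sum_comm]
    simp [ite_and]

def transitionMatrix (R : V → V → Prop) [DecidableRel R] : Matrix V V ℕ :=
  of fun i j => if R i j then 1 else 0

theorem trace_transitionMatrix_pow (R : V → V → Prop) [DecidableRel R] (n : ℕ) :
    (transitionMatrix R ^ n).trace =
      #{w : Fin (n + 1) → V | w (Fin.last n) = w 0 ∧ ∀ k : Fin n, R (w k.castSucc) (w k.succ)} := by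
  simp only [trace, diag, pow_apply_eq_sum_walks, transitionMatrix, of_apply, prod_boole]
  rw [card_eq_sum_ones]
  simp only [sum_filter]
  rw [sum_comm]
  simp [ite_and]

end Matrix

variable {V : Type*}

@[ext]
structure MarkovShift (R : V → V → Prop) where
  seq : ℕ → V
  rel : ∀ i, R (seq i) (seq (i + 1))

namespace MarkovShift

variable {R : V → V → Prop}

def shift (x : MarkovShift R) : MarkovShift R := ⟨fun i => x.seq (i + 1), fun i => x.rel (i + 1)⟩

theorem seq_shift_iterate (n : ℕ) (x : MarkovShift R) (i : ℕ) :
    (shift^[n] x).seq i = x.seq (i + n) := by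
  induction n generalizing i with
  | zero => rfl
  | succ n ih => rw [iterate_succ_apply', shift, ih, add_right_comm, add_assoc]

theorem seq_add_of_mem_fixedPoints {n : ℕ} {x : MarkovShift R} (hx : x ∈ fixedPoints shift^[n])
    (i : ℕ) : x.seq (i + n) = x.seq i := by
  rw [← seq_shift_iterate, hx.eq]

def ofClosedWalk {n : ℕ} (hn : n ≠ 0) (w : Fin (n + 1) → V)
    (hw : w (Fin.last n) = w 0 ∧ ∀ k : Fin n, R (w k.castSucc) (w k.succ)) : MarkovShift R where
  seq i := w ⟨i % n, (Nat.mod_lt i (Nat.pos_of_ne_zero hn)).trans n.lt_succ_self⟩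
  rel i := by
    have hi := Nat.mod_lt i (Nat.pos_of_ne_zero hn)
    have step := hw.2 ⟨i % n, hi⟩
    rcases (Nat.succ_le_of_lt hi).lt_or_eq with hlt | heq
    · have e : (i + 1) % n = i % n + 1 := by rw [← Nat.mod_add_mod, Nat.mod_eq_of_lt hlt]
      simp only [e]
      exact step
    · have e : (i + 1) % n = 0 := by
        rw [← Nat.mod_add_mod, ← Nat.succ_eq_add_one, heq, Nat.mod_self]
      rw [show (⟨i % n, hi⟩ : Fin n).succ = Fin.last n from Fin.ext heq, hw.1] at step
      simp only [e, Fin.zero_eta]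
      exact step

def fixedPointsEquivClosedWalks {n : ℕ} (hn : n ≠ 0) :
    fixedPoints (shift^[n] : MarkovShift R → MarkovShift R) ≃
      {w : Fin (n + 1) → V // w (Fin.last n) = w 0 ∧ ∀ k : Fin n, R (w k.castSucc) (w k.succ)} where
  toFun x := ⟨fun k => x.1.seq k, by simpa using seq_add_of_mem_fixedPoints x.2 0,
    fun k => x.1.rel k⟩
  invFun w := ⟨ofClosedWalk hn w.1 w.2, by ext i; simp [ofClosedWalk, seq_shift_iterate]⟩
  left_inv x := by
    ext i
    exact Periodic.map_mod_nat (seq_add_of_mem_fixedPoints x.2) i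
  right_inv w := by
    ext k
    change w.1 ⟨k % n, _⟩ = w.1 k
    rcases (Nat.lt_succ_iff.1 k.2).lt_or_eq with hk | hk
    · exact congrArg w.1 (Fin.ext (Nat.mod_eq_of_lt hk))
    · calc w.1 ⟨k % n, _⟩ = w.1 (Fin.last n) := by
            rw [w.2.1]
            exact congrArg w.1 (Fin.ext (by simp [hk]))
        _ = w.1 k := congrArg w.1 (Fin.ext hk.symm)

theorem finite_fixedPoints_shift_iterate [Finite V] {n : ℕ} (hn : n ≠ 0) :
    (fixedPoints (shift^[n] : MarkovShift R → MarkovShift R)).Finite :=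
  Set.finite_coe_iff.1 (Finite.of_equiv _ (fixedPointsEquivClosedWalks hn).symm)

theorem ncard_fixedPoints_shift_iterate [Fintype V] [DecidableEq V] [DecidableRel R] {n : ℕ}
    (hn : n ≠ 0) :
    (fixedPoints (shift^[n] : MarkovShift R → MarkovShift R)).ncard =
      (Matrix.transitionMatrix R ^ n).trace := by
  rw [Matrix.trace_transitionMatrix_pow, ← Nat.card_coe_set_eq,
    Nat.card_congr (fixedPointsEquivClosedWalks hn), Nat.card_eq_fintype_card,
    Fintype.card_subtype]

end MarkovShift

abbrev GoldenMeanShift : Type := MarkovShift fun a b : Bool => ¬(a ∧ b)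

namespace GoldenMeanShift

open MarkovShift

noncomputable def periodicCount (n : ℕ) : ℕ :=
  (fixedPoints (shift^[n] : GoldenMeanShift → GoldenMeanShift)).ncard

theorem periodicCount_one : periodicCount 1 = 1 := by
  rw [periodicCount, ncard_fixedPoints_shift_iterate one_ne_zero]
  decide

theorem periodicCount_two : periodicCount 2 = 3 := by
  rw [periodicCount, ncard_fixedPoints_shift_iterate two_ne_zero]
  decide

theorem periodicCount_add_three (n : ℕ) :
    periodicCount (n + 3) = periodicCount (n + 2) + periodicCount (n + 1) := by
  simp only [periodicCount, ncard_fixedPoints_shift_iterate (Nat.succ_ne_zero _)]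
  set M := Matrix.transitionMatrix fun a b : Bool => ¬(a ∧ b)
  have hM : M ^ 2 = M + 1 := by
    ext a b
    cases a <;> cases b <;> simp [M, Matrix.transitionMatrix, sq, Matrix.mul_apply]
  rw [pow_add M (n + 1) 2, hM, mul_add, mul_one, ← pow_succ, Matrix.trace_add]

theorem sum_moebius_periodicCount_eq {n : ℕ} (hn : n ≠ 0) :
    ∑ d ∈ n.divisors, moebius (n / d) * (periodicCount d : ℤ) =
      {x : GoldenMeanShift | minimalPeriod shift x = n}.ncard :=
  sum_moebius_ncard_fixedPoints _ (fun _ hm => finite_fixedPoints_shift_iterate hm) hn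

theorem dvd_sum_moebius_periodicCount {n : ℕ} (hn : n ≠ 0) :
    (n : ℤ) ∣ ∑ d ∈ n.divisors, moebius (n / d) * (periodicCount d : ℤ) :=
  dvd_sum_moebius_ncard_fixedPoints _ (fun _ hm => finite_fixedPoints_shift_iterate hm) hn

end GoldenMeanShift

theorem sum_moebius_mul_prime_pow_succ {p : ℕ} (hp : p.Prime) (k : ℕ) (g : ℕ → ℤ) :
    ∑ d ∈ (p ^ (k + 1)).divisors, moebius (p ^ (k + 1) / d) * g d =
      g (p ^ (k + 1)) - g (p ^ k) := by
  rw [Nat.sum_divisors_prime_pow hp, sum_range_succ, sum_range_succ,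
    sum_eq_zero fun i hi => ?_]
  · rw [Nat.div_self (pow_pos hp.pos _), Nat.pow_div (Nat.le_add_right k 1) hp.pos,
      Nat.add_sub_cancel_left, pow_one, moebius_apply_prime hp, moebius_apply_one]
    ring
  · have hi := mem_range.1 hi
    rw [Nat.pow_div (by omega) hp.pos, moebius_apply_prime_pow hp (by omega),
      if_neg (by omega), zero_mul]

theorem Nat.two_dvd_fib_iff {n : ℕ} : 2 ∣ fib n ↔ 3 ∣ n := by
  refine ⟨fun h => ?_, fun h => fib_dvd 3 n h⟩
  have hgcd : fib (Nat.gcd 3 n) = 2 := by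
    rw [fib_gcd, show fib 3 = 2 from rfl, Nat.gcd_eq_left h]
  rcases (Nat.dvd_prime Nat.prime_three).1 (Nat.gcd_dvd_left 3 n) with h1 | h3
  · rw [h1] at hgcd
    exact absurd hgcd (by decide)
  · exact h3 ▸ Nat.gcd_dvd_right 3 n

theorem odd_fib_two_pow_succ_sub_one_sub (k : ℕ) :
    Odd ((Nat.fib (2 ^ (k + 1) - 1) : ℤ) - Nat.fib (2 ^ k - 1)) := by
  have h3 : ¬ 3 ∣ 2 ^ k := fun h => absurd (Nat.prime_three.dvd_of_dvd_pow h) (by decide)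
  have hk : 2 ^ (k + 1) - 1 = 2 * (2 ^ k - 1) + 1 := by
    have := Nat.one_le_two_pow (n := k)
    rw [pow_succ]
    omega
  rw [Int.odd_sub, Int.odd_coe_nat, Int.even_coe_nat, ← Nat.not_even_iff_odd,
    even_iff_two_dvd, even_iff_two_dvd, Nat.two_dvd_fib_iff, Nat.two_dvd_fib_iff, hk]
  have := Nat.one_le_two_pow (n := k)
  lia

theorem Int.eq_zero_of_forall_two_pow_dvd {c : ℤ} (h : ∀ k, 2 ^ k ∣ c) : c = 0 := by
  by_contra hc
  obtain ⟨k, hk⟩ := (Int.finiteMultiplicity_iff (a := 2)).2 ⟨by decide, hc⟩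
  exact hk (h (k + 1))

theorem eq_of_add_two_eq_add {M : Type*} [Add M] {u v : ℕ → M}
    (hu : ∀ n, u (n + 2) = u (n + 1) + u n) (hv : ∀ n, v (n + 2) = v (n + 1) + v n)
    (h0 : u 0 = v 0) (h1 : u 1 = v 1) : u = v := by
  have h : ∀ n, u n = v n ∧ u (n + 1) = v (n + 1) := fun n => by
    induction n with
    | zero => exact ⟨h0, h1⟩
    | succ n ih => exact ⟨ih.2, by rw [hu, hv, ih.1, ih.2]⟩
  exact funext fun n => (h n).1

section FibonacciRecurrence

open GoldenMeanShift

variable {u : ℕ → ℤ}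

theorem eq_periodicCount_add_fib (hu : ∀ n, u (n + 3) = u (n + 2) + u (n + 1)) (n : ℕ) :
    u (n + 1) = u 1 * periodicCount (n + 1) + (u 2 - 3 * u 1) * Nat.fib n := by
  refine congrFun (eq_of_add_two_eq_add (u := fun n => u (n + 1))
    (v := fun n => u 1 * periodicCount (n + 1) + (u 2 - 3 * u 1) * Nat.fib n)
    hu (fun n => ?_) ?_ ?_) n
  · simp only [periodicCount_add_three, Nat.fib_add_two]
    push_cast
    ring
  · simp [periodicCount_one]
  · simp only [Nat.reduceAdd, periodicCount_two, Nat.fib_one]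
    push_cast
    ring

theorem sum_moebius_eq_periodicCount_add_fib (hu : ∀ n, u (n + 3) = u (n + 2) + u (n + 1))
    (n : ℕ) :
    ∑ d ∈ n.divisors, moebius (n / d) * u d =
      u 1 * ∑ d ∈ n.divisors, moebius (n / d) * (periodicCount d : ℤ) +
        (u 2 - 3 * u 1) * ∑ d ∈ n.divisors, moebius (n / d) * (Nat.fib (d - 1) : ℤ) := by
  rw [mul_sum, mul_sum, ← sum_add_distrib]
  refine sum_congr rfl fun d hd => ?_
  obtain ⟨e, rfl⟩ := Nat.exists_eq_add_one_of_ne_zero (Nat.pos_of_mem_divisors hd).ne'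
  rw [eq_periodicCount_add_fib hu, Nat.add_sub_cancel]
  ring

theorem eq_three_mul_of_forall_dvd_sum_moebius (hu : ∀ n, u (n + 3) = u (n + 2) + u (n + 1))
    (h : ∀ n : ℕ, n ≠ 0 → (n : ℤ) ∣ ∑ d ∈ n.divisors, moebius (n / d) * u d) : u 2 = 3 * u 1 := by
  suffices hc : ∀ k, 2 ^ (k + 1) ∣ u 2 - 3 * u 1 by
    have := Int.eq_zero_of_forall_two_pow_dvd fun k => (pow_dvd_pow 2 k.le_succ).trans (hc k)
    linarith
  intro k
  have hn := h (2 ^ (k + 1)) (by positivity)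
  rw [sum_moebius_eq_periodicCount_add_fib hu] at hn
  have hfib := (dvd_add_right ((dvd_sum_moebius_periodicCount (by positivity)).mul_left _)).1 hn
  rw [sum_moebius_mul_prime_pow_succ Nat.prime_two] at hfib
  push_cast at hfib
  refine Prime.pow_dvd_of_dvd_mul_right Int.prime_two _ (fun h2 => ?_) hfib
  exact Int.not_even_iff_odd.2 (odd_fib_two_pow_succ_sub_one_sub k) (even_iff_two_dvd.2 h2)

end FibonacciRecurrence

theorem realizable_iff_general (a b : ℕ)
    (U : ℕ → ℕ) (hU1 : U 1 = a) (hU2 : U 2 = b)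
    (hrec : ∀ n, 1 ≤ n → U (n + 2) = U (n + 1) + U n) :
    (∀ n, 1 ≤ n →
      0 ≤ ∑ d ∈ n.divisors, (ArithmeticFunction.moebius (n / d) : ℤ) * (U d : ℤ) ∧
      (n : ℤ) ∣ ∑ d ∈ n.divisors, (ArithmeticFunction.moebius (n / d) : ℤ) * (U d : ℤ)) ↔
    b = 3 * a := by
  have hu : ∀ n, (U (n + 3) : ℤ) = U (n + 2) + U (n + 1) := fun n => by
    rw [hrec (n + 1) le_add_self, Nat.cast_add]
  constructor
  · intro h
    have := eq_three_mul_of_forall_dvd_sum_moebius (u := fun n => (U n : ℤ)) hu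
      fun n hn => (h n (Nat.one_le_iff_ne_zero.2 hn)).2
    simp only [hU1, hU2] at this
    exact_mod_cast this
  · rintro rfl n hn
    have hn0 : n ≠ 0 := by omega
    have hsum := sum_moebius_eq_periodicCount_add_fib (u := fun n => (U n : ℤ)) hu n
    simp only [hU1, hU2] at hsum
    rw [hsum, Nat.cast_mul, Nat.cast_ofNat, sub_self, zero_mul, add_zero]
    refine ⟨mul_nonneg (Nat.cast_nonneg a) ?_,
      (GoldenMeanShift.dvd_sum_moebius_periodicCount hn0).mul_left _⟩
    rw [GoldenMeanShift.sum_moebius_periodicCount_eq hn0]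
    positivity

theorem realizable_iff (a b : ℕ) (ha : 0 < a) (hb : 0 < b)
    (U : ℕ → ℕ) (hU1 : U 1 = a) (hU2 : U 2 = b)
    (hrec : ∀ n, 1 ≤ n → U (n + 2) = U (n + 1) + U n) :
    (∀ n, 1 ≤ n →
      0 ≤ ∑ d ∈ n.divisors, (ArithmeticFunction.moebius (n / d) : ℤ) * (U d : ℤ) ∧
      (n : ℤ) ∣ ∑ d ∈ n.divisors, (ArithmeticFunction.moebius (n / d) : ℤ) * (U d : ℤ)) ↔
    b = 3 * a :=
  realizable_iff_general a b U hU1 hU2 hrec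
end

section
/- Suppose a, b are positive integers such that for every prime p, p divides a·F_{p-2} + b·F_{p-1} − a. Then b = 3a. -/
open Polynomial

private lemma fib_mod_key (p : ℕ) (hp : p.Prime) (hp2 : 2 < p) (h5 : p % 5 = 2 ∨ p % 5 = 3) :
    ((Nat.fib (p-1) : ZMod p) = 1 ∧ (Nat.fib p : ZMod p) = -1) := by
  haveI : Fact p.Prime := ⟨hp⟩
  haveI : Fact (Nat.Prime 5) := ⟨by norm_num⟩
  have hpne2 : p ≠ 2 := by omega
  have hleg : legendreSym p 5 = -1 := by
    have h1 := legendreSym.quadratic_reciprocity_one_mod_four (p := 5) (q := p) rfl hpne2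
    norm_num at h1
    have h2 : legendreSym 5 (p : ℤ) = legendreSym 5 ((p : ℤ) % 5) := legendreSym.mod 5 p
    have h3 : ((p : ℤ) % 5) = ((p % 5 : ℕ) : ℤ) := by push_cast; omega
    rcases h5 with h | h <;> rw [h1, h2, h3, h] <;> norm_num
  have hpow : (5 : ZMod p) ^ (p / 2) = -1 := by
    have := legendreSym.eq_pow p 5
    rw [hleg] at this
    push_cast at this
    exact this.symm
  set f : (ZMod p)[X] := X^2 - X - 1 with hf
  have hmonic : f.Monic := by rw [hf]; monicity!
  have hdeg : f.natDegree = 2 := by rw [hf]; compute_degree!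
  have hdeg' : f.degree = 2 := by
    rw [degree_eq_natDegree hmonic.ne_zero, hdeg]; rfl
  haveI : Nontrivial (AdjoinRoot f) := AdjoinRoot.nontrivial f (by rw [hdeg']; norm_num)
  haveI : CharP (AdjoinRoot f) p := charP_of_injective_algebraMap' (ZMod p) p
  set R := AdjoinRoot f with hR
  set φ : R := AdjoinRoot.root f with hphi
  have hroot : φ^2 = φ + 1 := by
    have h0 : (AdjoinRoot.mk f) f = 0 := AdjoinRoot.mk_self
    rw [hf] at h0
    simp only [map_sub, map_pow, map_one, AdjoinRoot.mk_X] at h0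
    linear_combination h0
  -- fib recurrence
  have hfib : ∀ n : ℕ, φ^(n+1) = (Nat.fib (n+1) : R) * φ + (Nat.fib n : R) := by
    intro n
    induction n with
    | zero => simp
    | succ n ih =>
      have h2 : Nat.fib (n+2) = Nat.fib n + Nat.fib (n+1) := Nat.fib_add_two
      rw [h2]
      push_cast
      calc φ^(n+1+1) = φ^(n+1) * φ := by ring
      _ = _ := by rw [ih]; linear_combination (Nat.fib (n+1) : R) * hroot
  -- Frobenius
  set α : R := 2*φ - 1 with hα
  have hα2 : α^2 = 5 := by rw [hα]; linear_combination (4:R) * hroot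
  have hodd : p = 2*(p/2) + 1 := by
    have := hp.two_le; rcases hp.eq_two_or_odd with h|h; omega; omega
  set g := algebraMap (ZMod p) R with hg
  have h5R : (5:R) = g 5 := (map_ofNat g 5).symm
  have hm1 : ((-1 : ZMod p) : ZMod p) = -1 := rfl
  have hαp : α^p = -α := by
    calc α^p = (α^2)^(p/2) * α := by rw [← pow_mul, ← pow_succ]; rw [← hodd]
    _ = g ((5:ZMod p)^(p/2)) * α := by rw [hα2, h5R, map_pow]
    _ = -α := by rw [hpow]; simp; exact neg_one_mul α
  have hfrob : α^p = 2*φ^p - 1 := by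
    rw [hα]
    have h1 : (2*φ - 1 : R) = 2*φ + (-1) := by ring
    rw [h1, add_pow_char]
    have h2 : ((-1:R))^p = -1 := by
      rcases Nat.Prime.eq_two_or_odd' hp with h|h; omega; exact h.neg_one_pow
    have h3 : (2:R)^p = 2 := by
      have : (2:R) = g 2 := (map_ofNat g 2).symm
      rw [this, ← map_pow, ZMod.pow_card]
    rw [mul_pow, h2, h3]
    ring
  have h2ne : (2 : ZMod p) ≠ 0 := by
    intro hc
    have h2 : ((2:ℕ) : ZMod p) = 0 := by exact_mod_cast hc
    have h3 : p ∣ 2 := (ZMod.natCast_eq_zero_iff 2 p).mp h2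
    have := Nat.le_of_dvd (by norm_num) h3
    omega
  have hphip : φ^p = 1 - φ := by
    have heq : g 2 * (φ^p - (1 - φ)) = 0 := by
      have h2g : (2:R) = g 2 := (map_ofNat g 2).symm
      rw [← h2g]
      linear_combination hαp - hfrob
    have := congrArg (g (2:ZMod p)⁻¹ * ·) heq
    simp only [mul_zero, ← mul_assoc, ← map_mul, inv_mul_cancel₀ h2ne, map_one, one_mul] at this
    linear_combination this
  -- express φ^p via fib
  have hp1 : p - 1 + 1 = p := by omega
  have hstep : (Nat.fib p : R) * φ + (Nat.fib (p-1) : R) = 1 - φ := by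
    have hh := hfib (p-1)
    rw [hp1] at hh
    rw [← hh, hphip]
  -- linear independence of 1, φ
  have hdim : (AdjoinRoot.powerBasis' hmonic).dim = 2 := by
    rw [AdjoinRoot.powerBasis'_dim, hdeg]
  have hli : LinearIndependent (ZMod p) ![(1:R), φ] := by
    have hb := (AdjoinRoot.powerBasis' hmonic).basis.linearIndependent
    set ι : Fin 2 → Fin (AdjoinRoot.powerBasis' hmonic).dim :=
      fun i => ⟨i, by rw [hdim]; exact i.2⟩ with hι
    have he : ![(1:R), φ] = (AdjoinRoot.powerBasis' hmonic).basis ∘ ι := by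
      funext i
      fin_cases i <;> rw [Function.comp_apply, PowerBasis.basis_eq_pow] <;>
        simp [AdjoinRoot.powerBasis'_gen, hι, hphi]
    rw [he]
    exact hb.comp ι (fun i j hij => by
      apply Fin.ext
      have := congrArg Fin.val hij
      simpa [hι] using this)
  have hsum : (((Nat.fib (p-1) : ZMod p) - 1) • (1:R)) + (((Nat.fib p : ZMod p) + 1) • φ) = 0 := by
    rw [Algebra.smul_def, Algebra.smul_def]
    simp only [map_sub, map_add, map_one, map_natCast]
    linear_combination hstep
  have hext := Fintype.linearIndependent_iff.mp hli
      ![(Nat.fib (p-1) : ZMod p) - 1, (Nat.fib p : ZMod p) + 1]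
      (by rw [Fin.sum_univ_two]; simpa using hsum)
  have h0 := hext 0
  have h1 := hext 1
  simp only [Matrix.cons_val_zero, Matrix.cons_val_one, Matrix.head_cons] at h0 h1
  constructor
  · linear_combination h0
  · linear_combination h1

private lemma mod5_closed : ∀ m : ℕ, 0 < m →
    (∀ q : ℕ, q.Prime → q ∣ m → q % 5 = 1 ∨ q % 5 = 4) → m % 5 = 1 ∨ m % 5 = 4 := by
  intro m
  induction m using Nat.strong_induction_on with
  | _ m ih =>
    intro hm H
    rcases eq_or_ne m 1 with rfl | h1
    · left; rfl
    · have hq : m.minFac.Prime := Nat.minFac_prime h1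
      obtain ⟨k, hk⟩ := Nat.minFac_dvd m
      have hk0 : 0 < k := by
        rcases Nat.eq_zero_or_pos k with h | h
        · subst h; simp at hk; omega
        · exact h
      have hklt : k < m := by
        rw [hk]
        exact (Nat.lt_mul_iff_one_lt_left hk0).mpr hq.one_lt
      have hkres := ih k hklt hk0 (fun r hr hrd => H r hr (hk ▸ hrd.mul_left m.minFac))
      have hqres := H m.minFac hq (Nat.minFac_dvd m)
      rw [hk, Nat.mul_mod]
      rcases hqres with h | h <;> rcases hkres with h' | h' <;> rw [h, h'] <;> norm_num

private lemma exists_prime_mod5 (n : ℕ) :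
    ∃ p : ℕ, p.Prime ∧ n < p ∧ (p % 5 = 2 ∨ p % 5 = 3) := by
  classical
  set P := ∏ q ∈ (n+1).primesBelow.erase 5, q with hP
  have hP0 : 0 < P :=
    Finset.prod_pos (fun q hq => (Nat.prime_of_mem_primesBelow (Finset.mem_of_mem_erase hq)).pos)
  have hcop : Nat.Coprime 5 P := Nat.Coprime.prod_right (fun q hq => by
    have hq5 : q ≠ 5 := Finset.ne_of_mem_erase hq
    have hqp : q.Prime := Nat.prime_of_mem_primesBelow (Finset.mem_of_mem_erase hq)
    exact (Nat.coprime_primes (by norm_num) hqp).mpr (Ne.symm hq5))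
  have hP5 : P % 5 ≠ 0 := by
    intro h
    have h5d : (5:ℕ) ∣ P := Nat.dvd_of_mod_eq_zero h
    have := Nat.dvd_gcd (dvd_refl 5) h5d
    rw [Nat.Coprime] at hcop
    rw [hcop] at this
    omega
  set N := P^4 + 1 with hN
  have hNmod : N % 5 = 2 := by
    have h4 : P^4 % 5 = 1 := by
      rw [Nat.pow_mod]
      have h5 : P % 5 < 5 := Nat.mod_lt _ (by norm_num)
      interval_cases h : P % 5 <;> simp_all
    omega
  have hN1 : 1 < N := by
    have : 0 < P^4 := by positivity
    omega
  by_contra hcon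
  push_neg at hcon
  have hall : ∀ q : ℕ, q.Prime → q ∣ N → q % 5 = 1 ∨ q % 5 = 4 := by
    intro q hq hqd
    have hq5 : q ≠ 5 := by
      rintro rfl
      obtain ⟨c, hc⟩ := hqd
      omega
    have hqP : ¬ q ∣ P := by
      intro hd
      have hd4 : q ∣ P^4 := dvd_pow hd (by norm_num)
      have h1 : q ∣ 1 := by
        have := Nat.dvd_sub hqd hd4
        rw [hN] at this
        simpa using this
      exact hq.one_lt.ne' (Nat.dvd_one.mp h1)
    have hqn : n < q := by
      by_contra hle
      push_neg at hle
      have hmem : q ∈ (n+1).primesBelow.erase 5 :=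
        Finset.mem_erase.mpr ⟨hq5, Nat.mem_primesBelow.mpr ⟨by omega, hq⟩⟩
      exact hqP (Finset.dvd_prod_of_mem _ hmem)
    have hc := hcon q hq hqn
    have hq0 : q % 5 ≠ 0 := by
      intro h0
      have h5d : (5:ℕ) ∣ q := Nat.dvd_of_mod_eq_zero h0
      exact hq5 ((Nat.prime_dvd_prime_iff_eq (by norm_num) hq).mp h5d).symm
    omega
  have := mod5_closed N (by omega) hall
  omega

theorem b_eq_three_a (a b : ℕ) (ha : 0 < a) (hb : 0 < b)
    (h : ∀ p : ℕ, p.Prime →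
      (p : ℤ) ∣ ((a : ℤ) * Nat.fib (p - 2) + (b : ℤ) * Nat.fib (p - 1) - (a : ℤ))) :
    b = 3 * a := by
  obtain ⟨p, hp, hlt, hres⟩ := exists_prime_mod5 (3*a + b + 3)
  have hp2 : 2 < p := by omega
  obtain ⟨hf1, hfp⟩ := fib_mod_key p hp hp2 hres
  have hadd : Nat.fib (p-2) + Nat.fib (p-1) = Nat.fib p := by
    have hft := Nat.fib_add_two (n := p-2)
    have h1 : p - 2 + 1 = p - 1 := by omega
    have h2 : p - 2 + 2 = p := by omega
    rw [h1, h2] at hft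
    omega
  have hf2 : (Nat.fib (p-2) : ZMod p) = -2 := by
    have hcast : ((Nat.fib (p-2) + Nat.fib (p-1) : ℕ) : ZMod p) = ((Nat.fib p : ℕ) : ZMod p) := by
      rw [hadd]
    push_cast at hcast
    rw [hf1, hfp] at hcast
    linear_combination hcast
  haveI : Fact p.Prime := ⟨hp⟩
  have d1 : (p:ℤ) ∣ ((Nat.fib (p-1) : ℤ) - 1) := by
    rw [← ZMod.intCast_zmod_eq_zero_iff_dvd]
    push_cast
    rw [hf1]
    ring
  have d2 : (p:ℤ) ∣ ((Nat.fib (p-2) : ℤ) + 2) := by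
    rw [← ZMod.intCast_zmod_eq_zero_iff_dvd]
    push_cast
    rw [hf2]
    ring
  obtain ⟨x, hx⟩ := h p hp
  obtain ⟨y, hy⟩ := d1
  obtain ⟨z, hz⟩ := d2
  have key : ((b:ℤ) - 3*a) = p * (x - a*z - b*y) := by
    linear_combination hx - (a:ℤ)*hz - (b:ℤ)*hy
  have habs : |(b:ℤ) - 3*a| < p := by
    rw [abs_lt]
    constructor <;> push_cast <;> omega
  have hz0 := Int.eq_zero_of_abs_lt_dvd ⟨_, key⟩ habs
  omega
end

section
/- If a sequence (U_n)_{n≥1} of nonnegative integers satisfies 0 ≤ ∑_{d ∣ n} μ(n/d) U_d ≡ 0 (mod n) for all n ≥ 1, then there exists a set X and a bijection f : X → X such that for every n ≥ 1, the number of x ∈ X with f^n(x) = x is exactly U_n. -/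
/-!
Möbius inversion of `U n = ∑_{d ∣ n} d * c d` gives `n * c n = ∑_{d ∣ n} μ (n / d) U d`, so the
hypothesis says exactly that the numbers `c n` of `n`-cycles are natural numbers. A disjoint union
of `c n` cycles of length `n` for every `n` then has `∑_{d ∣ k} d * c d = U k` points fixed by `f^[k]`.
-/

open Finset ArithmeticFunction
open scoped ArithmeticFunction.Moebius

lemma Int.exists_natCast_mul_eq_of_nonneg_of_dvd {s : ℤ} {n : ℕ} (hs : 0 ≤ s) (hn : (n : ℤ) ∣ s) :
    ∃ c : ℕ, (n : ℤ) * c = s :=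
  ⟨(s / n).toNat, by
    rw [Int.toNat_of_nonneg (Int.ediv_nonneg hs (Int.natCast_nonneg n)), Int.mul_ediv_cancel' hn]⟩

theorem exists_sum_divisors_mul_eq (U : ℕ → ℕ)
    (h : ∀ n, 0 < n →
      0 ≤ ∑ d ∈ n.divisors, (μ (n / d) : ℤ) * (U d : ℤ) ∧
      (n : ℤ) ∣ ∑ d ∈ n.divisors, (μ (n / d) : ℤ) * (U d : ℤ)) :
    ∃ c : ℕ → ℕ, ∀ n, 0 < n → ∑ d ∈ n.divisors, d * c d = U n := by
  choose! c hc using fun n hn => Int.exists_natCast_mul_eq_of_nonneg_of_dvd (h n hn).1 (h n hn).2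
  have hinv := (sum_eq_iff_sum_mul_moebius_eq (R := ℤ) (f := fun d => ((d * c d : ℕ) : ℤ))
    (g := fun n => (U n : ℤ))).mpr fun n hn => by
      simp only [Int.cast_id]
      rw [Nat.sum_divisorsAntidiagonal' (f := fun a b => (μ a : ℤ) * (U b : ℤ))]
      exact_mod_cast (hc n hn).symm
  exact ⟨c, fun n hn => by exact_mod_cast hinv n hn⟩

/-- The index `n = 0` contributes copies of the shift on `ZMod 0 = ℤ`, which has no periodic
points. -/
def cyclePerm (c : ℕ → ℕ) : Equiv.Perm (Σ n, Fin (c n) × ZMod n) :=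
  Equiv.sigmaCongrRight fun _ => Equiv.prodCongr (Equiv.refl _) (Equiv.addRight 1)

namespace cyclePerm

variable (c : ℕ → ℕ)

theorem iterate_apply (k : ℕ) (x : Σ n, Fin (c n) × ZMod n) :
    (cyclePerm c)^[k] x = ⟨x.1, x.2.1, x.2.2 + k⟩ := by
  induction k with
  | zero => simp
  | succ k ih =>
    rw [Function.iterate_succ_apply', ih]
    simp [cyclePerm, add_assoc]

theorem iterate_apply_eq_self_iff {k : ℕ} (hk : k ≠ 0) (x : Σ n, Fin (c n) × ZMod n) :
    (cyclePerm c)^[k] x = x ↔ x.1 ∈ k.divisors := by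
  obtain ⟨n, i, a⟩ := x
  simp [iterate_apply, ZMod.natCast_eq_zero_iff, hk]

theorem card_fixedPoints_iterate {k : ℕ} (hk : k ≠ 0) :
    Nat.card {x // (cyclePerm c)^[k] x = x} = ∑ d ∈ k.divisors, d * c d := by
  have : ∀ d : k.divisors, NeZero d.1 := fun d => ⟨(Nat.pos_of_mem_divisors d.2).ne'⟩
  rw [Nat.card_congr ((Equiv.subtypeEquivRight (iterate_apply_eq_self_iff c hk)).trans
    (Equiv.subtypeSigmaEquiv _ (· ∈ k.divisors))), Nat.card_sigma]
  simp only [Nat.card_eq_fintype_card, Fintype.card_prod, Fintype.card_fin, ZMod.card]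
  rw [Finset.sum_coe_sort k.divisors (fun d => c d * d)]
  exact Finset.sum_congr rfl fun d _ => mul_comm _ _

end cyclePerm

theorem exact_realization (U : ℕ → ℕ)
    (h : ∀ n, 1 ≤ n →
      0 ≤ ∑ d ∈ n.divisors, (ArithmeticFunction.moebius (n / d) : ℤ) * (U d : ℤ) ∧
      (n : ℤ) ∣ ∑ d ∈ n.divisors, (ArithmeticFunction.moebius (n / d) : ℤ) * (U d : ℤ)) :
    ∃ (X : Type) (f : X → X), Function.Bijective f ∧
      ∀ n, 1 ≤ n → Nat.card {x : X // f^[n] x = x} = U n := by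
  obtain ⟨c, hc⟩ := exists_sum_divisors_mul_eq U h
  refine ⟨_, cyclePerm c, (cyclePerm c).bijective, fun n hn => ?_⟩
  rw [cyclePerm.card_fixedPoints_iterate c (Nat.one_le_iff_ne_zero.mp hn), hc n hn]
end
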